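/- arXiv:2603.21292 — 2 statements merged into one kernel-verified Lean document; each statement's English description precedes it below -/
import Mathlib

section
/- Let q be an odd prime power and E, F ⊆ F_q². Then Σ_{t∈F_q} ν_{E,F}(t)² ≤ |E|²|F|²/q + q·√(𝓔_fib(E)·𝓔_fib(F)). -/
open Finset

/-- The additive energy `E₊(P,Q) = #{(x,x',y,y') ∈ P×P×Q×Q : x+y = x'+y'}`. -/
def additiveEnergyPQ {F : Type*} [Add F] [DecidableEq F] (P Q : Finset F) : ℕ :=
  (((P ×ˢ P) ×ˢ (Q ×ˢ Q)).filter fun z => z.1.1 + z.2.1 = z.1.2 + z.2.2).card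

/-- The vertical fiber `S_u = {y : (u,y) ∈ S}` of `S ⊆ F_q²`. -/
def vertFiber {F : Type*} [Fintype F] [DecidableEq F] (S : Finset (F × F)) (u : F) :
    Finset F :=
  Finset.univ.filter fun y : F => (u, y) ∈ S

/-- The fiber alignment energy `𝓔_fib(S) = Σ_{u,u'} E₊(S_u, S_{u'})`. -/
def fiberEnergy {F : Type*} [Add F] [Fintype F] [DecidableEq F] (S : Finset (F × F)) : ℕ :=
  ∑ u : F, ∑ u' : F, additiveEnergyPQ (vertFiber S u) (vertFiber S u')

/-- The bipartite parabolic distance counting function `ν_{E,F}(t)`. -/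
def parabolicNu2 {F : Type*} [Field F] [DecidableEq F]
    (E G : Finset (F × F)) (t : F) : ℕ :=
  ((E ×ˢ G).filter fun z : (F × F) × (F × F) =>
    (z.1.2 - z.2.2) + (z.1.1 - z.2.1) ^ 2 = t).card

namespace ParabolicAux

set_option linter.unusedSectionVars false

variable {K : Type*} [Field K] [Fintype K] [DecidableEq K]

noncomputable def ec (ψ : AddChar K ℂ) (S : Finset (K × K)) (u s : K) : ℂ :=
  ∑ y ∈ vertFiber S u, ψ (s * y)

noncomputable def Tc (ψ : AddChar K ℂ) (E G : Finset (K × K)) (s : K) : ℂ :=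
  ∑ p ∈ E ×ˢ G, ψ (s * ((p.1.2 - p.2.2) + (p.1.1 - p.2.1) ^ 2))

variable {ψ : AddChar K ℂ}

lemma ortho (hψ : ψ.IsPrimitive) (a : K) :
    ∑ s : K, ψ (s * a) = if a = 0 then (Fintype.card K : ℂ) else 0 :=
  by rw [AddChar.sum_mulShift a hψ]; split_ifs <;> simp

lemma conj_psi (x : K) : (starRingEnd ℂ) (ψ x) = ψ (-x) := (ψ.map_neg_eq_conj x).symm

lemma sum_fiber (S : Finset (K × K)) (f : K × K → ℂ) :
    ∑ x ∈ S, f x = ∑ u : K, ∑ y ∈ vertFiber S u, f (u, y) := by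
  have h : ∑ x ∈ S, f x = ∑ x : K × K, if x ∈ S then f x else 0 := by
    rw [Finset.sum_ite_mem, Finset.univ_inter]
  rw [h, Fintype.sum_prod_type]
  simp [vertFiber, Finset.sum_filter]


lemma Tc_fiber (E G : Finset (K × K)) (s : K) :
    Tc ψ E G s = ∑ u : K, ∑ v : K,
      ψ (s * (u - v) ^ 2) * (ec ψ E u s * (starRingEnd ℂ) (ec ψ G v s)) := by
  calc Tc ψ E G s
      = ∑ x ∈ E, ∑ y ∈ G, ψ (s * ((x.2 - y.2) + (x.1 - y.1) ^ 2)) := Finset.sum_product _ _ _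
    _ = ∑ u : K, ∑ a ∈ vertFiber E u, ∑ y ∈ G, ψ (s * ((a - y.2) + (u - y.1) ^ 2)) :=
        sum_fiber E _
    _ = ∑ u : K, ∑ a ∈ vertFiber E u, ∑ v : K, ∑ b ∈ vertFiber G v,
          ψ (s * ((a - b) + (u - v) ^ 2)) :=
        Finset.sum_congr rfl fun u _ => Finset.sum_congr rfl fun a _ => sum_fiber G _
    _ = ∑ u : K, ∑ v : K, ∑ a ∈ vertFiber E u, ∑ b ∈ vertFiber G v,
          ψ (s * ((a - b) + (u - v) ^ 2)) :=
        Finset.sum_congr rfl fun u _ => Finset.sum_comm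
    _ = ∑ u : K, ∑ v : K,
          ψ (s * (u - v) ^ 2) * (ec ψ E u s * (starRingEnd ℂ) (ec ψ G v s)) := by
        refine Finset.sum_congr rfl fun u _ => Finset.sum_congr rfl fun v _ => ?_
        rw [ec, ec, map_sum, Finset.sum_mul_sum]
        simp only [Finset.mul_sum]
        refine Finset.sum_congr rfl fun a _ => Finset.sum_congr rfl fun b _ => ?_
        rw [conj_psi, ← AddChar.map_add_eq_mul, ← AddChar.map_add_eq_mul]
        congr 1
        ring


lemma second_moment (hψ : ψ.IsPrimitive) (E G : Finset (K × K)) :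
    (Fintype.card K : ℂ) * ∑ t : K, (parabolicNu2 E G t : ℂ) ^ 2 =
      ∑ s : K, Tc ψ E G s * (starRingEnd ℂ) (Tc ψ E G s) := by
  set d : (K × K) × (K × K) → K :=
    fun p => (p.1.2 - p.2.2) + (p.1.1 - p.2.1) ^ 2 with hd
  have hnu : ∀ t : K, (parabolicNu2 E G t : ℂ) =
      ∑ p ∈ E ×ˢ G, if d p = t then (1 : ℂ) else 0 := by
    intro t
    rw [parabolicNu2, Finset.card_filter]
    push_cast
    rfl
  have L : ∑ t : K, (parabolicNu2 E G t : ℂ) ^ 2 =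
      ∑ p ∈ E ×ˢ G, ∑ p' ∈ E ×ˢ G, if d p = d p' then (1 : ℂ) else 0 := by
    simp_rw [hnu, sq, Finset.sum_mul_sum]
    rw [Finset.sum_comm]
    refine Finset.sum_congr rfl fun p _ => ?_
    rw [Finset.sum_comm]
    refine Finset.sum_congr rfl fun p' _ => ?_
    simp only [ite_mul, one_mul, zero_mul]
    rw [Finset.sum_ite_eq]
    simp [eq_comm]
  have R : ∑ s : K, Tc ψ E G s * (starRingEnd ℂ) (Tc ψ E G s) =
      ∑ p ∈ E ×ˢ G, ∑ p' ∈ E ×ˢ G, if d p = d p' then (Fintype.card K : ℂ) else 0 := by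
    simp_rw [Tc, map_sum, conj_psi, Finset.sum_mul_sum]
    rw [Finset.sum_comm]
    refine Finset.sum_congr rfl fun p _ => ?_
    rw [Finset.sum_comm]
    refine Finset.sum_congr rfl fun p' _ => ?_
    calc ∑ s : K, ψ (s * d p) * ψ (-(s * d p'))
        = ∑ s : K, ψ (s * (d p - d p')) := by
          refine Finset.sum_congr rfl fun s _ => ?_
          rw [← AddChar.map_add_eq_mul]
          congr 1
          ring
      _ = if d p - d p' = 0 then (Fintype.card K : ℂ) else 0 := ortho hψ _
      _ = if d p = d p' then (Fintype.card K : ℂ) else 0 := by simp [sub_eq_zero]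
  rw [L, R, Finset.mul_sum]
  simp_rw [Finset.mul_sum, mul_ite, mul_one, mul_zero]

lemma kernel_sum (hψ : ψ.IsPrimitive) {c : K} (hc : c ≠ 0) (b : K → ℂ) :
    ∑ u : K, (∑ v : K, ψ (c * (u * v)) * b v) *
        (starRingEnd ℂ) (∑ v : K, ψ (c * (u * v)) * b v) =
      (Fintype.card K : ℂ) * ∑ v : K, b v * (starRingEnd ℂ) (b v) := by
  have key : ∀ u : K, (∑ v : K, ψ (c * (u * v)) * b v) *
      (starRingEnd ℂ) (∑ v : K, ψ (c * (u * v)) * b v) =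
      ∑ v : K, ∑ v' : K, (b v * (starRingEnd ℂ) (b v')) * ψ (u * (c * (v - v'))) := by
    intro u
    rw [map_sum, Finset.sum_mul_sum]
    refine Finset.sum_congr rfl fun v _ => Finset.sum_congr rfl fun v' _ => ?_
    rw [map_mul (starRingEnd ℂ) (ψ (c * (u * v'))) (b v'), conj_psi]
    have : ψ (c * (u * v)) * ψ (-(c * (u * v'))) = ψ (u * (c * (v - v'))) := by
      rw [← AddChar.map_add_eq_mul]
      congr 1
      ring
    calc ψ (c * (u * v)) * b v * (ψ (-(c * (u * v'))) * (starRingEnd ℂ) (b v'))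
        = (b v * (starRingEnd ℂ) (b v')) * (ψ (c * (u * v)) * ψ (-(c * (u * v')))) := by ring
      _ = (b v * (starRingEnd ℂ) (b v')) * ψ (u * (c * (v - v'))) := by rw [this]
  simp_rw [key]
  rw [Finset.sum_comm]
  have inner : ∀ v : K, ∑ u : K, ∑ v' : K, (b v * (starRingEnd ℂ) (b v')) * ψ (u * (c * (v - v')))
      = (Fintype.card K : ℂ) * (b v * (starRingEnd ℂ) (b v)) := by
    intro v
    rw [Finset.sum_comm]
    have swap : ∀ v' : K, ∑ u : K, (b v * (starRingEnd ℂ) (b v')) * ψ (u * (c * (v - v')))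
        = (b v * (starRingEnd ℂ) (b v')) * if c * (v - v') = 0 then (Fintype.card K : ℂ) else 0 := by
      intro v'
      rw [← Finset.mul_sum, ortho hψ]
    simp_rw [swap]
    have hcond : ∀ v' : K, (c * (v - v') = 0) = (v = v') := by
      intro v'
      simp [mul_eq_zero, hc, sub_eq_zero]
    simp_rw [hcond, mul_ite, mul_zero]
    rw [Finset.sum_ite_eq]
    simp only [Finset.mem_univ, if_true]
    ring
  calc ∑ v : K, ∑ u : K, ∑ v' : K, (b v * (starRingEnd ℂ) (b v')) * ψ (u * (c * (v - v')))
      = ∑ v : K, (Fintype.card K : ℂ) * (b v * (starRingEnd ℂ) (b v)) :=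
        Finset.sum_congr rfl fun v _ => inner v
    _ = (Fintype.card K : ℂ) * ∑ v : K, b v * (starRingEnd ℂ) (b v) := by
        rw [Finset.mul_sum]


lemma conv_conj (z : ℂ) : z * (starRingEnd ℂ) z = ((‖z‖ ^ 2 : ℝ) : ℂ) := by
  rw [RCLike.mul_conj]
  norm_cast

lemma Tc_bound (hψ : ψ.IsPrimitive) (h2 : (2 : K) ≠ 0) (E G : Finset (K × K))
    {s : K} (hs : s ≠ 0) :
    ‖Tc ψ E G s‖ ^ 2 ≤ (Fintype.card K : ℝ) * (∑ u : K, ‖ec ψ E u s‖ ^ 2) *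
      ∑ v : K, ‖ec ψ G v s‖ ^ 2 := by
  set c : K := -(2 * s) with hcdef
  have hc : c ≠ 0 := by simp [hcdef, h2, hs]
  set b : K → ℂ := fun v => ψ (s * v ^ 2) * (starRingEnd ℂ) (ec ψ G v s) with hb
  set B : K → ℂ := fun u => ∑ v : K, ψ (c * (u * v)) * b v with hB
  have hT : Tc ψ E G s = ∑ u : K, (ec ψ E u s * ψ (s * u ^ 2)) * B u := by
    rw [Tc_fiber]
    refine Finset.sum_congr rfl fun u _ => ?_
    rw [hB]
    simp only [Finset.mul_sum]
    refine Finset.sum_congr rfl fun v _ => ?_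
    have key : ψ (s * (u - v) ^ 2) = ψ (s * u ^ 2) * (ψ (c * (u * v)) * ψ (s * v ^ 2)) := by
      rw [← AddChar.map_add_eq_mul, ← AddChar.map_add_eq_mul]
      congr 1
      rw [hcdef]
      ring
    rw [key, hb]
    ring
  have h1 : ‖Tc ψ E G s‖ ≤ ∑ u : K, ‖ec ψ E u s‖ * ‖B u‖ := by
    rw [hT]
    refine (norm_sum_le _ _).trans ?_
    refine Finset.sum_le_sum fun u _ => ?_
    rw [norm_mul, norm_mul, AddChar.norm_apply, mul_one]
  have h2' : ‖Tc ψ E G s‖ ^ 2 ≤ (∑ u : K, ‖ec ψ E u s‖ ^ 2) * ∑ u : K, ‖B u‖ ^ 2 := by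
    calc ‖Tc ψ E G s‖ ^ 2 ≤ (∑ u : K, ‖ec ψ E u s‖ * ‖B u‖) ^ 2 :=
          pow_le_pow_left₀ (norm_nonneg _) h1 2
      _ ≤ _ := Finset.sum_mul_sq_le_sq_mul_sq _ _ _
  have hBsum : ∑ u : K, ‖B u‖ ^ 2 = (Fintype.card K : ℝ) * ∑ v : K, ‖ec ψ G v s‖ ^ 2 := by
    have hker : ∑ u : K, B u * (starRingEnd ℂ) (B u) =
        (Fintype.card K : ℂ) * ∑ v : K, b v * (starRingEnd ℂ) (b v) := kernel_sum hψ hc b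
    simp_rw [conv_conj] at hker
    have hb2 : ∀ v : K, ‖b v‖ = ‖ec ψ G v s‖ := by
      intro v
      rw [hb]
      simp only []
      rw [norm_mul, AddChar.norm_apply, one_mul, RCLike.norm_conj]
    simp_rw [hb2] at hker
    exact_mod_cast hker
  calc ‖Tc ψ E G s‖ ^ 2
      ≤ (∑ u : K, ‖ec ψ E u s‖ ^ 2) * ∑ u : K, ‖B u‖ ^ 2 := h2'
    _ = (∑ u : K, ‖ec ψ E u s‖ ^ 2) *
        ((Fintype.card K : ℝ) * ∑ v : K, ‖ec ψ G v s‖ ^ 2) := by rw [hBsum]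
    _ = (Fintype.card K : ℝ) * (∑ u : K, ‖ec ψ E u s‖ ^ 2) *
        ∑ v : K, ‖ec ψ G v s‖ ^ 2 := by ring

lemma energy_pair (hψ : ψ.IsPrimitive) (P Q : Finset K) :
    ∑ s : K, ‖∑ y ∈ P, ψ (s * y)‖ ^ 2 * ‖∑ z ∈ Q, ψ (s * z)‖ ^ 2
      = (Fintype.card K : ℝ) * additiveEnergyPQ P Q := by
  have expand : ∀ s : K,
      ((∑ y ∈ P, ψ (s * y)) * (starRingEnd ℂ) (∑ y ∈ P, ψ (s * y))) *
        ((∑ z ∈ Q, ψ (s * z)) * (starRingEnd ℂ) (∑ z ∈ Q, ψ (s * z))) =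
      ∑ w ∈ (P ×ˢ P) ×ˢ (Q ×ˢ Q), ψ (s * ((w.1.1 + w.2.1) - (w.1.2 + w.2.2))) := by
    intro s
    simp only [map_sum, conj_psi, Finset.sum_mul_sum, Finset.sum_product]
    refine Finset.sum_congr rfl fun y _ => ?_
    rw [Finset.sum_comm]
    refine Finset.sum_congr rfl fun y' _ => Finset.sum_congr rfl fun z _ =>
      Finset.sum_congr rfl fun z' _ => ?_
    rw [← AddChar.map_add_eq_mul, ← AddChar.map_add_eq_mul, ← AddChar.map_add_eq_mul]
    congr 1
    ring
  have C : ∑ s : K,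
      ((∑ y ∈ P, ψ (s * y)) * (starRingEnd ℂ) (∑ y ∈ P, ψ (s * y))) *
        ((∑ z ∈ Q, ψ (s * z)) * (starRingEnd ℂ) (∑ z ∈ Q, ψ (s * z))) =
      (Fintype.card K : ℂ) * additiveEnergyPQ P Q := by
    simp_rw [expand]
    rw [Finset.sum_comm]
    have horth : ∀ w : (K × K) × (K × K),
        ∑ s : K, ψ (s * ((w.1.1 + w.2.1) - (w.1.2 + w.2.2))) =
        if w.1.1 + w.2.1 = w.1.2 + w.2.2 then (Fintype.card K : ℂ) else 0 := by
      intro w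
      rw [ortho hψ]
      simp [sub_eq_zero]
    simp_rw [horth]
    rw [← Finset.sum_filter, Finset.sum_const, additiveEnergyPQ, nsmul_eq_mul]
    ring
  simp_rw [conv_conj] at C
  exact_mod_cast C

lemma energy_sum (hψ : ψ.IsPrimitive) (S : Finset (K × K)) :
    ∑ s : K, (∑ u : K, ‖ec ψ S u s‖ ^ 2) ^ 2 = (Fintype.card K : ℝ) * fiberEnergy S := by
  have sq_expand : ∀ s : K, (∑ u : K, ‖ec ψ S u s‖ ^ 2) ^ 2 =
      ∑ u : K, ∑ u' : K, ‖ec ψ S u s‖ ^ 2 * ‖ec ψ S u' s‖ ^ 2 := by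
    intro s
    rw [sq, Finset.sum_mul_sum]
  simp_rw [sq_expand]
  rw [Finset.sum_comm]
  have step : ∀ u : K, ∑ s : K, ∑ u' : K, ‖ec ψ S u s‖ ^ 2 * ‖ec ψ S u' s‖ ^ 2 =
      ∑ u' : K, (Fintype.card K : ℝ) *
        additiveEnergyPQ (vertFiber S u) (vertFiber S u') := by
    intro u
    rw [Finset.sum_comm]
    exact Finset.sum_congr rfl fun u' _ => energy_pair hψ _ _
  simp_rw [step]
  rw [fiberEnergy]
  push_cast
  rw [Finset.mul_sum]
  refine Finset.sum_congr rfl fun u _ => ?_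
  rw [Finset.mul_sum]

end ParabolicAux

theorem bipartite_second_moment_fiber_energy_bound
    {F : Type*} [Field F] [Fintype F] [DecidableEq F]
    (hq : Odd (Fintype.card F))
    (E G : Finset (F × F)) :
    (∑ t : F, (parabolicNu2 E G t : ℝ) ^ 2) ≤
      (E.card : ℝ) ^ 2 * (G.card : ℝ) ^ 2 / (Fintype.card F : ℝ) +
        (Fintype.card F : ℝ) *
          Real.sqrt ((fiberEnergy E : ℝ) * (fiberEnergy G : ℝ)) := by
  classical
  set ψ : AddChar F ℂ := AddChar.FiniteField.primitiveChar_to_Complex F with hψdef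
  have hψ : ψ.IsPrimitive := AddChar.FiniteField.primitiveChar_to_Complex_isPrimitive F
  set q : ℕ := Fintype.card F with hqdef
  have hq0 : 0 < q := Fintype.card_pos
  have hqR : (0 : ℝ) < (q : ℝ) := by exact_mod_cast hq0
  have h2 : (2 : F) ≠ 0 := by
    intro h
    have hdvd : ringChar F ∣ 2 := (CharP.cast_eq_zero_iff F (ringChar F) 2).1 (by exact_mod_cast h)
    have h1 : ringChar F ≠ 1 := CharP.ringChar_ne_one
    have hchar : ringChar F = 2 :=
      (Nat.prime_two.eq_one_or_self_of_dvd _ hdvd).resolve_left h1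
    have heven := FiniteField.even_card_of_char_two hchar
    have hodd := Nat.odd_iff.1 hq
    omega
  set N : ℝ := ∑ t : F, (parabolicNu2 E G t : ℝ) ^ 2 with hN
  set X : F → ℝ := fun s => ∑ u : F, ‖ParabolicAux.ec ψ E u s‖ ^ 2 with hX
  set Y : F → ℝ := fun s => ∑ v : F, ‖ParabolicAux.ec ψ G v s‖ ^ 2 with hY
  have hXnn : ∀ s, 0 ≤ X s := fun s => Finset.sum_nonneg fun _ _ => sq_nonneg _
  have hYnn : ∀ s, 0 ≤ Y s := fun s => Finset.sum_nonneg fun _ _ => sq_nonneg _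
  -- second moment identity
  have key : (q : ℝ) * N = ∑ s : F, ‖ParabolicAux.Tc ψ E G s‖ ^ 2 := by
    rw [hN, hqdef]
    have hc := ParabolicAux.second_moment hψ E G
    simp_rw [ParabolicAux.conv_conj] at hc
    apply Complex.ofReal_injective
    push_cast
    exact_mod_cast hc
  -- value at 0
  have hT0 : ‖ParabolicAux.Tc ψ E G 0‖ ^ 2 = (E.card : ℝ) ^ 2 * (G.card : ℝ) ^ 2 := by
    have h0 : ParabolicAux.Tc ψ E G 0 = ((E.card * G.card : ℕ) : ℂ) := by
      rw [ParabolicAux.Tc]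
      simp [Finset.card_product]
    rw [h0, Complex.norm_natCast]
    push_cast
    ring
  have hsplit : ∑ s : F, ‖ParabolicAux.Tc ψ E G s‖ ^ 2 =
      ‖ParabolicAux.Tc ψ E G 0‖ ^ 2 +
        ∑ s ∈ Finset.univ.erase 0, ‖ParabolicAux.Tc ψ E G s‖ ^ 2 :=
    (Finset.add_sum_erase _ _ (Finset.mem_univ 0)).symm
  have herr : ∑ s ∈ Finset.univ.erase 0, ‖ParabolicAux.Tc ψ E G s‖ ^ 2 ≤
      (q : ℝ) * ∑ s : F, X s * Y s := by
    calc ∑ s ∈ Finset.univ.erase 0, ‖ParabolicAux.Tc ψ E G s‖ ^ 2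
        ≤ ∑ s ∈ Finset.univ.erase 0, (q : ℝ) * (X s * Y s) := by
          refine Finset.sum_le_sum fun s hs => ?_
          have hsne : s ≠ 0 := Finset.ne_of_mem_erase hs
          have := ParabolicAux.Tc_bound hψ h2 E G hsne
          calc ‖ParabolicAux.Tc ψ E G s‖ ^ 2
              ≤ (q : ℝ) * X s * Y s := this
            _ = (q : ℝ) * (X s * Y s) := by ring
      _ ≤ ∑ s : F, (q : ℝ) * (X s * Y s) := by
          refine Finset.sum_le_sum_of_subset_of_nonneg (Finset.subset_univ _) fun s _ _ => ?_
          exact mul_nonneg hqR.le (mul_nonneg (hXnn s) (hYnn s))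
      _ = (q : ℝ) * ∑ s : F, X s * Y s := by rw [Finset.mul_sum]
  have hcs : ∑ s : F, X s * Y s ≤
      Real.sqrt (∑ s : F, X s ^ 2) * Real.sqrt (∑ s : F, Y s ^ 2) :=
    Real.sum_mul_le_sqrt_mul_sqrt _ _ _
  have hEX : ∑ s : F, X s ^ 2 = (q : ℝ) * (fiberEnergy E : ℝ) := ParabolicAux.energy_sum hψ E
  have hEY : ∑ s : F, Y s ^ 2 = (q : ℝ) * (fiberEnergy G : ℝ) := ParabolicAux.energy_sum hψ G
  have hprod : Real.sqrt ((q : ℝ) * (fiberEnergy E : ℝ)) *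
      Real.sqrt ((q : ℝ) * (fiberEnergy G : ℝ)) =
      (q : ℝ) * Real.sqrt ((fiberEnergy E : ℝ) * (fiberEnergy G : ℝ)) := by
    rw [← Real.sqrt_mul (by positivity)]
    have hr : (q : ℝ) * (fiberEnergy E : ℝ) * ((q : ℝ) * (fiberEnergy G : ℝ)) =
        (q : ℝ) ^ 2 * ((fiberEnergy E : ℝ) * (fiberEnergy G : ℝ)) := by ring
    rw [hr, Real.sqrt_mul (by positivity), Real.sqrt_sq hqR.le]
  have final : (q : ℝ) * N ≤ (E.card : ℝ) ^ 2 * (G.card : ℝ) ^ 2 +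
      (q : ℝ) ^ 2 * Real.sqrt ((fiberEnergy E : ℝ) * (fiberEnergy G : ℝ)) := by
    calc (q : ℝ) * N = ‖ParabolicAux.Tc ψ E G 0‖ ^ 2 +
          ∑ s ∈ Finset.univ.erase 0, ‖ParabolicAux.Tc ψ E G s‖ ^ 2 := by
          rw [key, hsplit]
      _ ≤ (E.card : ℝ) ^ 2 * (G.card : ℝ) ^ 2 + (q : ℝ) * ∑ s : F, X s * Y s := by
          rw [hT0]
          exact add_le_add le_rfl herr
      _ ≤ (E.card : ℝ) ^ 2 * (G.card : ℝ) ^ 2 +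
          (q : ℝ) * (Real.sqrt (∑ s : F, X s ^ 2) * Real.sqrt (∑ s : F, Y s ^ 2)) := by
          exact add_le_add le_rfl (mul_le_mul_of_nonneg_left hcs hqR.le)
      _ = (E.card : ℝ) ^ 2 * (G.card : ℝ) ^ 2 +
          (q : ℝ) ^ 2 * Real.sqrt ((fiberEnergy E : ℝ) * (fiberEnergy G : ℝ)) := by
          rw [hEX, hEY, hprod]
          ring
  have hdiv : N ≤ ((E.card : ℝ) ^ 2 * (G.card : ℝ) ^ 2 +
      (q : ℝ) ^ 2 * Real.sqrt ((fiberEnergy E : ℝ) * (fiberEnergy G : ℝ))) / (q : ℝ) := by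
    rw [le_div_iff₀ hqR]
    calc N * (q : ℝ) = (q : ℝ) * N := by ring
      _ ≤ _ := final
  calc N ≤ ((E.card : ℝ) ^ 2 * (G.card : ℝ) ^ 2 +
        (q : ℝ) ^ 2 * Real.sqrt ((fiberEnergy E : ℝ) * (fiberEnergy G : ℝ))) / (q : ℝ) := hdiv
    _ = (E.card : ℝ) ^ 2 * (G.card : ℝ) ^ 2 / (q : ℝ) +
        (q : ℝ) * Real.sqrt ((fiberEnergy E : ℝ) * (fiberEnergy G : ℝ)) := by
        field_simp
end

section
/- Let p be an odd prime and let M, N be integers with 1 ≤ M ≤ N and M² + 2N ≤ p. Let A := {0,1,…,M−1} and B := {0,1,…,N−1}, regarded as subsets of F_p via reduction mod p, and set E := A×B ⊆ F_p². Then |E| = M·N and |Δ_P(E)| = (M−1)² + 2N − 1. -/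
open Finset

/-- The parabolic distance set of `E ⊆ F_p²`. -/
def parabolicDistSet {F : Type*} [CommRing F] [DecidableEq F] (E : Finset (F × F)) :
    Finset F :=
  (E ×ˢ E).image fun z : (F × F) × (F × F) => (z.1.2 - z.2.2) + (z.1.1 - z.2.1) ^ 2

lemma castInjOnIcc (p : ℕ) (hp : 0 < p) (lo hi : ℤ) (hlen : hi - lo < p) :
    Set.InjOn (Int.cast : ℤ → ZMod p) (Finset.Icc lo hi) := by
  intro x hx y hy hxy
  simp only [Finset.coe_Icc, Set.mem_Icc] at hx hy
  rw [ZMod.intCast_eq_intCast_iff_dvd_sub] at hxy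
  have : y - x = 0 := Int.eq_zero_of_abs_lt_dvd hxy (by rw [abs_lt]; omega)
  omega

lemma natCastInjOnRange (p n : ℕ) (hn : n ≤ p) :
    Set.InjOn (Nat.cast : ℕ → ZMod p) (Finset.range n) := by
  intro x hx y hy hxy
  simp only [Finset.coe_range, Set.mem_Iio] at hx hy
  haveI : NeZero p := ⟨by omega⟩
  have := congrArg ZMod.val hxy
  rwa [ZMod.val_cast_of_lt (by omega), ZMod.val_cast_of_lt (by omega)] at this

theorem grid_construction
    (p : ℕ) (hp : p.Prime) (hodd : Odd p)
    (M N : ℕ) (hM : 1 ≤ M) (hMN : M ≤ N) (hp' : M ^ 2 + 2 * N ≤ p) :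
    ((((Finset.range M).image (Nat.cast : ℕ → ZMod p)) ×ˢ
        ((Finset.range N).image (Nat.cast : ℕ → ZMod p))).card = M * N) ∧
    (parabolicDistSet (((Finset.range M).image (Nat.cast : ℕ → ZMod p)) ×ˢ
        ((Finset.range N).image (Nat.cast : ℕ → ZMod p)))).card =
      (M - 1) ^ 2 + 2 * N - 1 := by
  have hMM : M ≤ M ^ 2 := by nlinarith
  have hMp : M ≤ p := by omega
  have hNp : N ≤ p := by nlinarith
  have hA := Finset.card_image_of_injOn (natCastInjOnRange p M hMp)
  have hB := Finset.card_image_of_injOn (natCastInjOnRange p N hNp)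
  rw [Finset.card_range] at hA hB
  constructor
  · rw [Finset.card_product, hA, hB]
  -- the distance set equals the image of an integer interval
  set A := (Finset.range M).image (Nat.cast : ℕ → ZMod p) with hAdef
  set B := (Finset.range N).image (Nat.cast : ℕ → ZMod p) with hBdef
  set lo : ℤ := 1 - N with hlo
  set hi : ℤ := ((M - 1 : ℕ) : ℤ) ^ 2 + N - 1 with hhi
  have hMcast : ((M - 1 : ℕ) : ℤ) = (M : ℤ) - 1 := by push_cast [hM]; ring
  have hset : parabolicDistSet (A ×ˢ B) =
      (Finset.Icc lo hi).image (Int.cast : ℤ → ZMod p) := by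
    ext t
    simp only [parabolicDistSet, Finset.mem_image, Finset.mem_product, Finset.mem_Icc]
    constructor
    · rintro ⟨⟨⟨x1, x2⟩, ⟨y1, y2⟩⟩, ⟨⟨hx1, hx2⟩, hy1, hy2⟩, ht⟩
      simp only [hAdef, hBdef, Finset.mem_image, Finset.mem_range] at hx1 hx2 hy1 hy2
      obtain ⟨a1, ha1, rfl⟩ := hx1
      obtain ⟨b1, hb1, rfl⟩ := hx2
      obtain ⟨a2, ha2, rfl⟩ := hy1
      obtain ⟨b2, hb2, rfl⟩ := hy2
      refine ⟨((b1 : ℤ) - b2) + ((a1 : ℤ) - a2) ^ 2, ⟨?_, ?_⟩, ?_⟩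
      · have : (0 : ℤ) ≤ ((a1 : ℤ) - a2) ^ 2 := sq_nonneg _
        have hb : (1 : ℤ) - N ≤ (b1 : ℤ) - b2 := by
          have : (b1 : ℤ) ≥ 0 := by positivity
          have : (b2 : ℤ) < N := by exact_mod_cast hb2
          omega
        omega
      · have hsq : ((a1 : ℤ) - a2) ^ 2 ≤ ((M : ℤ) - 1) ^ 2 := by
          have h1 : (a1 : ℤ) < M := by exact_mod_cast ha1
          have h2 : (a2 : ℤ) < M := by exact_mod_cast ha2
          have h3 : (0 : ℤ) ≤ a1 := by positivity
          have h4 : (0 : ℤ) ≤ a2 := by positivity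
          apply sq_le_sq' <;> omega
        have hb : (b1 : ℤ) - b2 ≤ N - 1 := by
          have : (b1 : ℤ) < N := by exact_mod_cast hb1
          have : (b2 : ℤ) ≥ 0 := by positivity
          omega
        rw [hhi, hMcast]; omega
      · rw [← ht]; push_cast; ring
    · rintro ⟨z, ⟨hz1, hz2⟩, rfl⟩
      -- choose s
      set k := M - 1 with hk
      have hzhi : z ≤ (k : ℤ) ^ 2 + N - 1 := hz2
      set u : ℕ := (z + N - 1).toNat with hu
      have hucast : (u : ℤ) = z + N - 1 := by rw [hu]; omega
      have hk2 : ((k ^ 2 : ℕ) : ℤ) = (k : ℤ) ^ 2 := by push_cast; ring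
      have hu2 : u ≤ k ^ 2 + 2 * N - 2 := by omega
      set r := Nat.sqrt u with hr
      have hr1 : r ^ 2 ≤ u := Nat.sqrt_le' u
      have hr2 : u < (r + 1) ^ 2 := Nat.lt_succ_sqrt' u
      set s := min r k with hs
      have hsk : s ≤ k := min_le_right _ _
      have hss1 : s ^ 2 ≤ u := by
        rcases le_or_gt r k with h | h
        · have : s = r := by omega
          rw [this]; exact hr1
        · have hsk' : s = k := by omega
          have : k ^ 2 ≤ r ^ 2 := Nat.pow_le_pow_left (le_of_lt h) 2
          rw [hsk']; omega
      have hss2 : u ≤ s ^ 2 + 2 * N - 2 := by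
        rcases le_or_gt r k with h | h
        · have hse : s = r := by omega
          have hrN : r < N := by
            by_contra hcon
            push_neg at hcon
            have : N ^ 2 ≤ r ^ 2 := Nat.pow_le_pow_left hcon 2
            have hkN : k ≤ N - 1 := by omega
            have : k ^ 2 ≤ (N - 1) ^ 2 := Nat.pow_le_pow_left hkN 2
            have : (N - 1) ^ 2 + 2 * N - 2 ≤ N ^ 2 - 1 := by
              rcases Nat.exists_eq_add_of_le (show 1 ≤ N by omega) with ⟨m, rfl⟩
              ring_nf
              omega
            omega
          have hexp : (r + 1) ^ 2 = r ^ 2 + 2 * r + 1 := by ring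
          rw [hse]
          omega
        · have hsk' : s = k := by omega
          rw [hsk']; omega
      -- d
      set d : ℤ := z - ((s ^ 2 : ℕ) : ℤ) with hd
      have hdlo : 1 - (N : ℤ) ≤ d := by
        have : ((s ^ 2 : ℕ) : ℤ) ≤ (u : ℤ) := by exact_mod_cast hss1
        omega
      have hdhi : d ≤ (N : ℤ) - 1 := by
        have h1 : (u : ℤ) ≤ ((s ^ 2 : ℕ) : ℤ) + 2 * N - 2 := by
          have := hss2
          have h2 : ((s ^ 2 + 2 * N - 2 : ℕ) : ℤ) = ((s ^ 2 : ℕ) : ℤ) + 2 * N - 2 := by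
            push_cast [show 2 ≤ s ^ 2 + 2 * N by omega]; ring
          calc (u : ℤ) ≤ ((s ^ 2 + 2 * N - 2 : ℕ) : ℤ) := by exact_mod_cast this
            _ = _ := h2
        omega
      set b1 : ℕ := d.toNat with hb1
      set b2 : ℕ := (-d).toNat with hb2
      have hb1N : b1 < N := by omega
      have hb2N : b2 < N := by omega
      have hb12 : (b1 : ℤ) - b2 = d := by omega
      refine ⟨(((s : ZMod p), (b1 : ZMod p)), (((0 : ℕ) : ZMod p), (b2 : ZMod p))),
        ⟨⟨?_, ?_⟩, ?_, ?_⟩, ?_⟩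
      · exact Finset.mem_image_of_mem _ (Finset.mem_range.mpr (by omega))
      · exact Finset.mem_image_of_mem _ (Finset.mem_range.mpr hb1N)
      · exact Finset.mem_image_of_mem _ (Finset.mem_range.mpr (by omega))
      · exact Finset.mem_image_of_mem _ (Finset.mem_range.mpr hb2N)
      · have key : ((b1 : ℤ) - b2) + ((s : ℤ) - ((0 : ℕ) : ℤ)) ^ 2 = z := by
          have : ((s : ℤ)) ^ 2 = ((s ^ 2 : ℕ) : ℤ) := by push_cast; ring
          push_cast
          rw [hb12]
          simp only [sub_zero]
          omega
        calc ((b1 : ZMod p) - (b2 : ZMod p)) + ((s : ZMod p) - ((0 : ℕ) : ZMod p)) ^ 2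
            = ((((b1 : ℤ) - b2) + ((s : ℤ) - ((0 : ℕ) : ℤ)) ^ 2 : ℤ) : ZMod p) := by
              push_cast; ring
          _ = (z : ZMod p) := by rw [key]
  rw [hset]
  have hlen : hi - lo < p := by
    have hkN : ((M - 1 : ℕ) : ℤ) ^ 2 = (((M - 1) ^ 2 : ℕ) : ℤ) := by push_cast; ring
    have hMk : (M - 1) ^ 2 + 2 * N ≤ p := by
      have : (M - 1) ^ 2 ≤ M ^ 2 := Nat.pow_le_pow_left (by omega) 2
      omega
    rw [hhi, hlo, hkN]
    omega
  rw [Finset.card_image_of_injOn (castInjOnIcc p hp.pos lo hi hlen)]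
  rw [Int.card_Icc]
  have hkN : ((M - 1 : ℕ) : ℤ) ^ 2 = (((M - 1) ^ 2 : ℕ) : ℤ) := by push_cast; ring
  rw [hhi, hlo, hkN]
  omega
end
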